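/- If ρ is a b-storage encoding of a distribution X (i.e., each ρ(x) is a density matrix on at most b qubits, a Hilbert space of dimension at most 2^b), then H∞(X;ρ) ≥ H∞(X) − b. -/

import Mathlib

open scoped BigOperators ComplexOrder

namespace QExt

/-- Bit strings of length `n`. -/
abbrev BS (n : ℕ) := Fin n → Bool

/-- Trace norm of a complex matrix: `Tr √(AᴴA)` (sum of singular values;
for Hermitian `A` this is the sum of the absolute values of the eigenvalues). -/
noncomputable def traceNorm {ι : Type} [Fintype ι] [DecidableEq ι]
    (A : Matrix ι ι ℂ) : ℝ :=
  (((Matrix.posSemidef_conjTranspose_mul_self A).1.eigenvectorUnitary : Matrix ι ι ℂ) *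
      Matrix.diagonal (((↑) : ℝ → ℂ) ∘ (√·) ∘ (Matrix.posSemidef_conjTranspose_mul_self A).1.eigenvalues) *
      (star (Matrix.posSemidef_conjTranspose_mul_self A).1.eigenvectorUnitary : Matrix ι ι ℂ)).trace.re

/-- Trace distance between two matrices. -/
noncomputable def traceDist {ι : Type} [Fintype ι] [DecidableEq ι]
    (A B : Matrix ι ι ℂ) : ℝ :=
  traceNorm (A - B) / 2

/-- A density matrix: positive semidefinite with trace 1. -/
def IsDensity {ι : Type} [Fintype ι] [DecidableEq ι] (ρ : Matrix ι ι ℂ) : Prop :=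
  ρ.PosSemidef ∧ ρ.trace = 1

/-- A probability distribution on a finite set. -/
def IsDist {Λ : Type} [Fintype Λ] (D : Λ → ℝ) : Prop :=
  (∀ a, 0 ≤ D a) ∧ ∑ a, D a = 1

/-- A flat distribution: uniform over its support. -/
def IsFlat {Λ : Type} [Fintype Λ] (D : Λ → ℝ) : Prop :=
  ∀ a b, D a ≠ 0 → D b ≠ 0 → D a = D b

/-- Min-entropy `H∞(D) = -log₂ max_a D(a)`. -/
noncomputable def minEntropy {Λ : Type} [Fintype Λ] (D : Λ → ℝ) : ℝ :=
  - Real.logb 2 (⨆ a, D a)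

/-- A POVM indexed by `Λ`: positive semidefinite operators summing to the identity. -/
def IsPOVM {Λ ι : Type} [Fintype Λ] [Fintype ι] [DecidableEq ι]
    (F : Λ → Matrix ι ι ℂ) : Prop :=
  (∀ x, (F x).PosSemidef) ∧ ∑ x, F x = 1

/-- Optimal probability of guessing `x ∼ X` from the encoding `ρ(x)`. -/
noncomputable def guessProb {Λ ι : Type} [Fintype Λ] [Fintype ι] [DecidableEq ι]
    (X : Λ → ℝ) (ρ : Λ → Matrix ι ι ℂ) : ℝ :=
  sSup {p : ℝ | ∃ F : Λ → Matrix ι ι ℂ,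
    IsPOVM F ∧ p = ∑ x, X x * ((F x * ρ x).trace).re}

/-- Conditional min-entropy `H∞(X;ρ) = -log₂ guessProb`. -/
noncomputable def condMinEntropy {Λ ι : Type} [Fintype Λ] [Fintype ι] [DecidableEq ι]
    (X : Λ → ℝ) (ρ : Λ → Matrix ι ι ℂ) : ℝ :=
  - Real.logb 2 (guessProb X ρ)

/-- The cq-state `U ∘ E(X,U) ∘ ρ(X)`, represented by its (subnormalized) blocks
indexed by the classical value `(y, z)`. -/
noncomputable def extState {Λ Y Z ι : Type} [Fintype Λ] [Fintype Y] [Fintype Z]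
    [DecidableEq Z] [Fintype ι] [DecidableEq ι]
    (E : Λ → Y → Z) (X : Λ → ℝ) (ρ : Λ → Matrix ι ι ℂ) :
    Y × Z → Matrix ι ι ℂ :=
  fun yz => ((Fintype.card Y : ℝ))⁻¹ • ∑ x, if E x yz.1 = yz.2 then X x • ρ x else 0

/-- The ideal state `U × ρ̄_X`: uniform classical part, average encoding. -/
noncomputable def idealState (Y Z : Type) [Fintype Y] [Fintype Z]
    {Λ ι : Type} [Fintype Λ] [Fintype ι] [DecidableEq ι]
    (X : Λ → ℝ) (ρ : Λ → Matrix ι ι ℂ) : Y × Z → Matrix ι ι ℂ :=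
  fun _ => ((Fintype.card Y * Fintype.card Z : ℝ))⁻¹ • ∑ x, X x • ρ x

/-- Trace distance between two cq states given by their blocks. -/
noncomputable def cqDist {Z ι : Type} [Fintype Z] [Fintype ι] [DecidableEq ι]
    (σ τ : Z → Matrix ι ι ℂ) : ℝ :=
  (∑ z, traceNorm (σ z - τ z)) / 2

/-- The extractor error `‖U ∘ E(X,U) ∘ ρ(X) − U × ρ̄_X‖_tr`. -/
noncomputable def extError {Λ Y Z ι : Type} [Fintype Λ] [Fintype Y] [Fintype Z]
    [DecidableEq Z] [Fintype ι] [DecidableEq ι]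
    (E : Λ → Y → Z) (X : Λ → ℝ) (ρ : Λ → Matrix ι ι ℂ) : ℝ :=
  cqDist (extState E X ρ) (idealState Y Z X ρ)

/-- Statistical (variational) distance between distributions. -/
noncomputable def statDist {Λ : Type} [Fintype Λ] (D₁ D₂ : Λ → ℝ) : ℝ :=
  (∑ a, |D₁ a - D₂ a|) / 2

/-- The output distribution `(U_d, C(X,U_d))` of a condenser. -/
noncomputable def condOut {n d n' : ℕ} (C : BS n → BS d → BS n') (X : BS n → ℝ) :
    BS d × BS n' → ℝ :=
  fun p => ((2 ^ d : ℝ))⁻¹ * ∑ x, if C x p.1 = p.2 then X x else 0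

/-- `C` is an `(n,k₁) →_ε (n',k₂)` strong condenser. -/
def IsStrongCondenser {n d n' : ℕ} (C : BS n → BS d → BS n')
    (k₁ k₂ : ℝ) (ε : ℝ) : Prop :=
  ∀ X : BS n → ℝ, IsDist X → k₁ ≤ minEntropy X →
    ∃ D' : BS d × BS n' → ℝ, IsDist D' ∧ (d : ℝ) + k₂ ≤ minEntropy D' ∧
      statDist (condOut C X) D' ≤ ε

/-- The classical pure state `|y⟩⟨y|`. -/
noncomputable def ketbra {d : ℕ} (y : BS d) : Matrix (BS d) (BS d) ℂ :=
  Matrix.of fun a b => if a = y ∧ b = y then 1 else 0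

/-- The extension `ℰ ⊗ id_N` of a linear map on matrices. -/
noncomputable def extendMap {ι κ : Type} [Fintype ι] [Fintype κ]
    (ℰ : Matrix ι ι ℂ →ₗ[ℂ] Matrix κ κ ℂ) (N : ℕ)
    (A : Matrix (ι × Fin N) (ι × Fin N) ℂ) : Matrix (κ × Fin N) (κ × Fin N) ℂ :=
  Matrix.of fun p q => ℰ (Matrix.of fun i j => A (i, p.2) (j, q.2)) p.1 q.1

/-- Completely positive trace-preserving map. -/
def IsCPTP {ι κ : Type} [Fintype ι] [Fintype κ]
    (ℰ : Matrix ι ι ℂ →ₗ[ℂ] Matrix κ κ ℂ) : Prop :=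
  (∀ (N : ℕ) (A : Matrix (ι × Fin N) (ι × Fin N) ℂ), A.PosSemidef →
      (extendMap ℰ N A).PosSemidef) ∧
  (∀ A : Matrix ι ι ℂ, (ℰ A).trace = A.trace)

end QExt

/-!
A density matrix satisfies `0 ≤ ρ ≤ 1`, so for a POVM `F` each term `Tr(F_x ρ(x))` is at most
`Tr F_x`, and these traces sum to the dimension `dm ≤ 2^b`. Hence the guessing probability is at
most `2^b · max_x Pr[X = x]`, while guessing the most likely value already achieves the maximum.
-/

open scoped MatrixOrder

namespace Matrix

variable {n : Type} [Fintype n] [DecidableEq n]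

theorem PosSemidef.trace_mul_nonneg {A B : Matrix n n ℂ} (hA : A.PosSemidef)
    (hB : B.PosSemidef) : 0 ≤ (A * B).trace := by
  obtain ⟨S, rfl⟩ := CStarAlgebra.nonneg_iff_eq_star_mul_self.mp hA.nonneg
  rw [mul_assoc, trace_mul_comm]
  exact (hB.mul_mul_conjTranspose_same S).trace_nonneg

theorem PosSemidef.trace_mul_le_trace {A B : Matrix n n ℂ} (hA : A.PosSemidef) (hB : B ≤ 1) :
    (A * B).trace ≤ A.trace := by
  have := hA.trace_mul_nonneg (le_iff.mp hB)
  rwa [mul_sub, mul_one, trace_sub, sub_nonneg] at this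

theorem PosSemidef.le_one_of_trace_eq_one {ρ : Matrix n n ℂ} (hρ : ρ.PosSemidef)
    (htr : ρ.trace = 1) : ρ ≤ 1 := by
  have hsum : ∑ j, hρ.1.eigenvalues j = 1 := by
    simpa [htr] using congrArg Complex.re hρ.1.trace_eq_sum_eigenvalues.symm
  refine CFC.le_one (R := ℝ) (fun x hx => ?_) hρ.1.isSelfAdjoint
  obtain ⟨i, rfl⟩ := hρ.1.spectrum_real_eq_range_eigenvalues ▸ hx
  exact hsum ▸ Finset.single_le_sum (fun j _ => hρ.eigenvalues_nonneg j) (Finset.mem_univ i)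

end Matrix

namespace QExt

section Guessing

variable {Λ : Type} [Fintype Λ] {ι : Type} [Fintype ι] [DecidableEq ι]

theorem IsDist.exists_pos {D : Λ → ℝ} (hD : IsDist D) : ∃ a, 0 < D a := by
  by_contra! h
  linarith [hD.2, Finset.sum_nonpos fun a (_ : a ∈ Finset.univ) => h a]

theorem IsDist.iSup_pos {D : Λ → ℝ} (hD : IsDist D) : 0 < ⨆ a, D a :=
  let ⟨a, ha⟩ := hD.exists_pos
  ha.trans_le (le_ciSup (Set.finite_range D).bddAbove a)

theorem IsPOVM.sum_trace {F : Λ → Matrix ι ι ℂ} (hF : IsPOVM F) :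
    ∑ x, (F x).trace = Fintype.card ι := by
  rw [← Matrix.trace_sum, hF.2, Matrix.trace_one]

theorem isPOVM_pi_single [DecidableEq Λ] (x₀ : Λ) :
    IsPOVM (Pi.single x₀ (1 : Matrix ι ι ℂ)) := by
  refine ⟨fun x => ?_, by simp⟩
  rcases eq_or_ne x x₀ with rfl | hx
  · simpa using Matrix.PosSemidef.one
  · simpa [hx] using Matrix.PosSemidef.zero

theorem IsPOVM.successProb_le_card_mul_iSup {F : Λ → Matrix ι ι ℂ} (hF : IsPOVM F)
    {X : Λ → ℝ} (hX : ∀ a, 0 ≤ X a) {ρ : Λ → Matrix ι ι ℂ} (hρ : ∀ x, IsDensity (ρ x)) :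
    ∑ x, X x * ((F x * ρ x).trace).re ≤ Fintype.card ι * ⨆ a, X a := by
  have hterm (x : Λ) : X x * ((F x * ρ x).trace).re ≤ (⨆ a, X a) * ((F x).trace).re := by
    have hle := (hF.1 x).trace_mul_le_trace ((hρ x).1.le_one_of_trace_eq_one (hρ x).2)
    exact mul_le_mul (le_ciSup (Set.finite_range X).bddAbove x) (Complex.le_def.mp hle).1
      (Complex.le_def.mp ((hF.1 x).trace_mul_nonneg (hρ x).1)).1 (Real.iSup_nonneg hX)
  calc ∑ x, X x * ((F x * ρ x).trace).re ≤ ∑ x, (⨆ a, X a) * ((F x).trace).re :=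
        Finset.sum_le_sum fun x _ => hterm x
    _ = Fintype.card ι * ⨆ a, X a := by
        rw [← Finset.mul_sum, ← Complex.re_sum, hF.sum_trace, Complex.natCast_re, mul_comm]

theorem guessProb_le_card_mul_iSup {X : Λ → ℝ} (hX : ∀ a, 0 ≤ X a) {ρ : Λ → Matrix ι ι ℂ}
    (hρ : ∀ x, IsDensity (ρ x)) : guessProb X ρ ≤ Fintype.card ι * ⨆ a, X a :=
  Real.sSup_le (by rintro _ ⟨F, hF, rfl⟩; exact hF.successProb_le_card_mul_iSup hX hρ)
    (mul_nonneg (Nat.cast_nonneg _) (Real.iSup_nonneg hX))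

theorem iSup_le_guessProb {X : Λ → ℝ} (hX : IsDist X) {ρ : Λ → Matrix ι ι ℂ}
    (hρ : ∀ x, IsDensity (ρ x)) : ⨆ a, X a ≤ guessProb X ρ := by
  classical
  have : Nonempty Λ := let ⟨a, _⟩ := hX.exists_pos; ⟨a⟩
  refine ciSup_le fun x₀ => le_csSup ?_ ⟨_, isPOVM_pi_single x₀, ?_⟩
  · exact ⟨_, by rintro _ ⟨F, hF, rfl⟩; exact hF.successProb_le_card_mul_iSup hX.1 hρ⟩
  · rw [Finset.sum_eq_single x₀ (fun x _ hx => by simp [hx]) (by simp)]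
    simp [(hρ x₀).2]

end Guessing

/-- A `b`-storage encoding reduces min-entropy by at most `b`:
`H∞(X;ρ) ≥ H∞(X) − b`. -/
theorem stmt4 {Λ : Type} [Fintype Λ] {dm b : ℕ} (hdm : dm ≤ 2 ^ b)
    (X : Λ → ℝ) (hX : IsDist X)
    (ρ : Λ → Matrix (Fin dm) (Fin dm) ℂ) (hρ : ∀ x, IsDensity (ρ x)) :
    minEntropy X - b ≤ condMinEntropy X ρ := by
  have hmax := hX.iSup_pos
  have hlow := iSup_le_guessProb hX hρ
  have hup : guessProb X ρ ≤ 2 ^ b * ⨆ a, X a := by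
    refine (guessProb_le_card_mul_iSup hX.1 hρ).trans (mul_le_mul_of_nonneg_right ?_ hmax.le)
    simpa using (Nat.cast_le (α := ℝ)).mpr hdm
  have hlog := Real.logb_le_logb_of_le one_lt_two (hmax.trans_le hlow) hup
  rw [Real.logb_mul (by positivity) hmax.ne', Real.logb_pow, Real.logb_self_eq_one one_lt_two]
    at hlog
  unfold minEntropy condMinEntropy
  linarith

end QExt
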